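/- If L₁ and L₂ are visibly pushdown languages over a common partition Σ = Σ_c ⊔ Σ_i ⊔ Σ_r, then L₁ ∪ L₂ is a visibly pushdown language over that partition. -/

import Mathlib

inductive VKind | call | internal | response
deriving DecidableEq

/-- A (nondeterministic) visibly pushdown automaton over alphabet `A`
partitioned by `kind` into call, internal and response letters. -/
structure VPA (A : Type) (kind : A → VKind) where
  Q : Type
  Γ : Type
  [finQ : Fintype Q]
  [finΓ : Fintype Γ]
  init : Q
  accept : Set Q
  /-- transitions on call letters: push one symbol, do not inspect the stack -/
  δc : Q → A → Set (Q × Γ)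
  /-- transitions on internal letters: do not inspect or modify the stack -/
  δi : Q → A → Set Q
  /-- transitions on response letters: pop the topmost stack symbol -/
  δr : Q → A → Γ → Set Q
  /-- transitions on response letters read on the empty stack (bottom symbol) -/
  δb : Q → A → Set Q

namespace VPA

variable {A : Type} {kind : A → VKind}

inductive Steps (M : VPA A kind) : M.Q × List M.Γ → List A → M.Q × List M.Γ → Prop
  | nil (c) : Steps M c [] c
  | call {q s a q' γ w c} : kind a = .call → (q', γ) ∈ M.δc q a →
      Steps M (q', γ :: s) w c → Steps M (q, s) (a :: w) c
  | internal {q s a q' w c} : kind a = .internal → q' ∈ M.δi q a →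
      Steps M (q', s) w c → Steps M (q, s) (a :: w) c
  | pop {q γ s a q' w c} : kind a = .response → q' ∈ M.δr q a γ →
      Steps M (q', s) w c → Steps M (q, γ :: s) (a :: w) c
  | popEmpty {q a q' w c} : kind a = .response → q' ∈ M.δb q a →
      Steps M (q', []) w c → Steps M (q, []) (a :: w) c

/-- A VPA accepts a word if reading it from the initial state with empty stack
can end in an accepting state (with arbitrary stack contents). -/
def Accepts (M : VPA A kind) (w : List A) : Prop :=
  ∃ c : M.Q × List M.Γ, M.Steps (M.init, []) w c ∧ c.1 ∈ M.accept

end VPA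

/-- `L` is a visibly pushdown language over the partition `kind`. -/
def IsVPL {A : Type} (kind : A → VKind) (L : Set (List A)) : Prop :=
  ∃ M : VPA A kind, L = {w | M.Accepts w}

/-
A word is accepted by one of two nondeterministic automata iff it is accepted by their disjoint
sum, started in a fresh initial state that on the first letter may take any first move of either
component. After that first move the run stays in one component, using only that component's stack
symbols, so it is exactly a run of that component.
-/

namespace VPA

variable {A : Type} {kind : A → VKind}

def next (M : VPA A kind) (c : M.Q × List M.Γ) (a : A) : Set (M.Q × List M.Γ) :=
  match kind a, c.2 with
  | .call, s => (fun p => (p.1, p.2 :: s)) '' M.δc c.1 a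
  | .internal, s => (·, s) '' M.δi c.1 a
  | .response, γ :: s => (·, s) '' M.δr c.1 a γ
  | .response, [] => (·, []) '' M.δb c.1 a

def AcceptsFrom (M : VPA A kind) (c : M.Q × List M.Γ) (w : List A) : Prop :=
  ∃ c', M.Steps c w c' ∧ c'.1 ∈ M.accept

variable {M : VPA A kind} {c c' : M.Q × List M.Γ} {a : A} {w : List A}

theorem steps_nil_iff : M.Steps c [] c' ↔ c' = c :=
  ⟨by rintro ⟨⟩; rfl, by rintro rfl; exact .nil _⟩

theorem steps_cons_iff :
    M.Steps c (a :: w) c' ↔ ∃ d ∈ M.next c a, M.Steps d w c' := by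
  constructor
  · rintro (_ | ⟨ha, hδ, h⟩ | ⟨ha, hδ, h⟩ | ⟨ha, hδ, h⟩ | ⟨ha, hδ, h⟩) <;>
      exact ⟨_, by simp only [next, ha]; exact ⟨_, hδ, rfl⟩, h⟩
  · obtain ⟨q, s⟩ := c
    rintro ⟨d, hd, h⟩
    rcases hk : kind a <;> cases s <;> simp only [next, hk] at hd <;> obtain ⟨q', hδ, rfl⟩ := hd
    all_goals first
      | exact .call hk hδ h | exact .internal hk hδ h | exact .pop hk hδ h | exact .popEmpty hk hδ h

theorem acceptsFrom_nil : M.AcceptsFrom c [] ↔ c.1 ∈ M.accept := by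
  simp only [AcceptsFrom, steps_nil_iff, exists_eq_left]

theorem acceptsFrom_cons :
    M.AcceptsFrom c (a :: w) ↔ ∃ d ∈ M.next c a, M.AcceptsFrom d w := by
  simp only [AcceptsFrom, steps_cons_iff]
  tauto

theorem accepts_iff_acceptsFrom : M.Accepts w ↔ M.AcceptsFrom (M.init, []) w := Iff.rfl

structure Embedding (M N : VPA A kind) where
  state : M.Q → N.Q
  stack : M.Γ → N.Γ
  δc_state : ∀ q a, N.δc (state q) a = Prod.map state stack '' M.δc q a
  δi_state : ∀ q a, N.δi (state q) a = state '' M.δi q a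
  δr_state : ∀ q a γ, N.δr (state q) a (stack γ) = state '' M.δr q a γ
  δb_state : ∀ q a, N.δb (state q) a = state '' M.δb q a
  state_mem_accept : ∀ q, state q ∈ N.accept ↔ q ∈ M.accept

namespace Embedding

variable {N : VPA A kind} (e : Embedding M N)

def config : M.Q × List M.Γ → N.Q × List N.Γ :=
  Prod.map e.state (List.map e.stack)

theorem next_config : N.next (e.config c) a = e.config '' M.next c a := by
  obtain ⟨q, s⟩ := c
  rcases hk : kind a <;> cases s <;>
    simp [next, hk, config, e.δc_state, e.δi_state, e.δr_state, e.δb_state, Set.image_image]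

theorem acceptsFrom_config : N.AcceptsFrom (e.config c) w ↔ M.AcceptsFrom c w := by
  induction w generalizing c with
  | nil => exact acceptsFrom_nil.trans ((e.state_mem_accept c.1).trans acceptsFrom_nil.symm)
  | cons a w ih => simp only [acceptsFrom_cons, next_config, Set.exists_mem_image, ih]

end Embedding

/-- The fresh initial state `none` is never re-entered, so it is only ever seen with empty stack
and needs no pop transitions. -/
def sum (M₁ M₂ : VPA A kind) : VPA A kind where
  Q := Option (M₁.Q ⊕ M₂.Q)
  Γ := M₁.Γ ⊕ M₂.Γ
  finQ := have := M₁.finQ; have := M₂.finQ; inferInstance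
  finΓ := have := M₁.finΓ; have := M₂.finΓ; inferInstance
  init := none
  accept
    | none => M₁.init ∈ M₁.accept ∨ M₂.init ∈ M₂.accept
    | some (.inl q) => q ∈ M₁.accept
    | some (.inr q) => q ∈ M₂.accept
  δc
    | none, a => Prod.map (some ∘ .inl) .inl '' M₁.δc M₁.init a ∪
        Prod.map (some ∘ .inr) .inr '' M₂.δc M₂.init a
    | some (.inl q), a => Prod.map (some ∘ .inl) .inl '' M₁.δc q a
    | some (.inr q), a => Prod.map (some ∘ .inr) .inr '' M₂.δc q a
  δi
    | none, a => (some ∘ .inl) '' M₁.δi M₁.init a ∪ (some ∘ .inr) '' M₂.δi M₂.init a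
    | some (.inl q), a => (some ∘ .inl) '' M₁.δi q a
    | some (.inr q), a => (some ∘ .inr) '' M₂.δi q a
  δr
    | some (.inl q), a, .inl γ => (some ∘ .inl) '' M₁.δr q a γ
    | some (.inr q), a, .inr γ => (some ∘ .inr) '' M₂.δr q a γ
    | _, _, _ => ∅
  δb
    | none, a => (some ∘ .inl) '' M₁.δb M₁.init a ∪ (some ∘ .inr) '' M₂.δb M₂.init a
    | some (.inl q), a => (some ∘ .inl) '' M₁.δb q a
    | some (.inr q), a => (some ∘ .inr) '' M₂.δb q a

variable (M₁ M₂ : VPA A kind)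

def Embedding.inl : Embedding M₁ (M₁.sum M₂) where
  state := some ∘ .inl
  stack := .inl
  δc_state _ _ := rfl
  δi_state _ _ := rfl
  δr_state _ _ _ := rfl
  δb_state _ _ := rfl
  state_mem_accept _ := Iff.rfl

def Embedding.inr : Embedding M₂ (M₁.sum M₂) where
  state := some ∘ .inr
  stack := .inr
  δc_state _ _ := rfl
  δi_state _ _ := rfl
  δr_state _ _ _ := rfl
  δb_state _ _ := rfl
  state_mem_accept _ := Iff.rfl

theorem next_sum_init :
    (M₁.sum M₂).next ((M₁.sum M₂).init, []) a =
      (Embedding.inl M₁ M₂).config '' M₁.next (M₁.init, []) a ∪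
        (Embedding.inr M₁ M₂).config '' M₂.next (M₂.init, []) a := by
  rcases hk : kind a <;> simp only [next, hk] <;>
    simp only [sum, Set.image_union, Set.image_image] <;> rfl

theorem accepts_sum : (M₁.sum M₂).Accepts w ↔ M₁.Accepts w ∨ M₂.Accepts w := by
  simp only [accepts_iff_acceptsFrom]
  cases w with
  | nil => simp only [acceptsFrom_nil]; rfl
  | cons a w =>
    simp only [acceptsFrom_cons, next_sum_init, Set.mem_union, or_and_right, exists_or,
      Set.exists_mem_image, Embedding.acceptsFrom_config]

end VPA

/-- VPLs over a common partition are closed under union. -/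
theorem IsVPL.union {A : Type} (kind : A → VKind) (L₁ L₂ : Set (List A))
    (h₁ : IsVPL kind L₁) (h₂ : IsVPL kind L₂) : IsVPL kind (L₁ ∪ L₂) := by
  obtain ⟨M₁, rfl⟩ := h₁
  obtain ⟨M₂, rfl⟩ := h₂
  exact ⟨M₁.sum M₂, Set.ext fun _ => (VPA.accepts_sum M₁ M₂).symm⟩
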